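/- Let A and B be two S-mincuts such that A ∩ B and A ∪ B define S-cuts (equivalently, S ∩ A ∩ B ≠ ∅ and S \ (A ∪ B) ≠ ∅). Then there is no edge between A \ B and B \ A; that is, w a b = 0 for every a ∈ A \ B and b ∈ B \ A. -/
import Mathlib


open Finset

/-- Capacity of the cut defined by `A`: number of edges with one endpoint in `A`
and the other outside `A`. -/
def cap {V : Type*} [Fintype V] [DecidableEq V] (w : V → V → ℕ) (A : Finset V) : ℕ :=
  ∑ a ∈ A, ∑ b ∈ Aᶜ, w a b

/-- A cut of `V` is a subset `A` with `∅ ≠ A ≠ V`. -/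
def IsCut {V : Type*} [Fintype V] (A : Finset V) : Prop :=
  A ≠ ∅ ∧ A ≠ Finset.univ

/-- An `S`-cut is a cut that divides `S`. -/
def IsSCut {V : Type*} [Fintype V] [DecidableEq V] (S A : Finset V) : Prop :=
  IsCut A ∧ (A ∩ S).Nonempty ∧ (S \ A).Nonempty

/-- An `S`-mincut is an `S`-cut of minimum capacity among all `S`-cuts. -/
def IsSMincut {V : Type*} [Fintype V] [DecidableEq V] (w : V → V → ℕ) (S A : Finset V) : Prop :=
  IsSCut S A ∧ ∀ B : Finset V, IsSCut S B → cap w A ≤ cap w B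

/-- `T ⊆ S` is a valid cut of `S` if some `S`-mincut `A` satisfies `A ∩ S = T`. -/
def IsValidCut {V : Type*} [Fintype V] [DecidableEq V] (w : V → V → ℕ) (S T : Finset V) : Prop :=
  ∃ A : Finset V, IsSMincut w S A ∧ A ∩ S = T

/-- A tight mincut for a valid cut `T` of `S`. -/
def IsTightMincut {V : Type*} [Fintype V] [DecidableEq V] (w : V → V → ℕ)
    (S T N : Finset V) : Prop :=
  IsSMincut w S N ∧ N ∩ S = T ∧ ∀ A : Finset V, IsSMincut w S A → A ∩ S = T → N ⊆ A

/-- A loose mincut for a valid cut `T` of `S`. -/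
def IsLooseMincut {V : Type*} [Fintype V] [DecidableEq V] (w : V → V → ℕ)
    (S T F : Finset V) : Prop :=
  IsSMincut w S F ∧ F ∩ S = T ∧ ∀ A : Finset V, IsSMincut w S A → A ∩ S = T → A ⊆ F


lemma cap_eq {V : Type*} [Fintype V] [DecidableEq V] (w : V → V → ℕ) (A : Finset V) :
    cap w A = ∑ u : V, ∑ v : V, if u ∈ A ∧ v ∉ A then w u v else 0 := by
  have inner : ∀ u : V, (∑ v : V, if u ∈ A ∧ v ∉ A then w u v else 0)
      = if u ∈ A then ∑ v ∈ Aᶜ, w u v else 0 := by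
    intro u
    by_cases h : u ∈ A
    · simp only [h, true_and, if_true]
      rw [← Finset.sum_filter]
      congr 1
      ext v
      simp
    · simp [h]
  rw [Finset.sum_congr rfl fun u _ => inner u, ← Finset.sum_filter]
  unfold cap
  congr 1
  ext u
  simp

lemma submod_key {V : Type*} [Fintype V] [DecidableEq V] (w : V → V → ℕ) (A B : Finset V) :
    cap w A + cap w B = cap w (A ∩ B) + cap w (A ∪ B)
      + ∑ u : V, ∑ v : V, ((if u ∈ A ∧ u ∉ B ∧ v ∈ B ∧ v ∉ A then w u v else 0)
          + (if u ∈ B ∧ u ∉ A ∧ v ∈ A ∧ v ∉ B then w u v else 0)) := by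
  simp only [cap_eq, ← Finset.sum_add_distrib]
  refine Finset.sum_congr rfl fun u _ => Finset.sum_congr rfl fun v _ => ?_
  simp only [Finset.mem_inter, Finset.mem_union, not_and_or, not_or]
  by_cases hua : u ∈ A <;> by_cases hub : u ∈ B <;> by_cases hva : v ∈ A <;>
    by_cases hvb : v ∈ B <;> simp [hua, hub, hva, hvb]

/-- If `A` and `B` are `S`-mincuts such that `A ∩ B` and `A ∪ B` define `S`-cuts,
then there is no edge between `A \ B` and `B \ A`. -/
theorem no_edge_between_smincut_corners {V : Type*} [Fintype V] [DecidableEq V]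
    (w : V → V → ℕ) (hsymm : ∀ u v : V, w u v = w v u) (hloop : ∀ v : V, w v v = 0)
    (S : Finset V) (hS : 2 ≤ S.card)
    (A B : Finset V) (hA : IsSMincut w S A) (hB : IsSMincut w S B)
    (hI : (S ∩ A ∩ B).Nonempty) (hU : (S \ (A ∪ B)).Nonempty) :
    ∀ a ∈ A \ B, ∀ b ∈ B \ A, w a b = 0 := by
  obtain ⟨s, hs⟩ := hI
  obtain ⟨t, ht⟩ := hU
  simp only [Finset.mem_inter] at hs
  simp only [Finset.mem_sdiff, Finset.mem_union, not_or] at ht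
  have hIcut : IsSCut S (A ∩ B) := by
    refine ⟨⟨?_, ?_⟩, ⟨s, ?_⟩, ⟨t, ?_⟩⟩
    · exact Finset.ne_empty_of_mem (Finset.mem_inter.2 ⟨hs.1.2, hs.2⟩)
    · intro h
      have := h ▸ Finset.mem_univ t
      simp only [Finset.mem_inter] at this
      exact ht.2.1 this.1
    · exact Finset.mem_inter.2 ⟨Finset.mem_inter.2 ⟨hs.1.2, hs.2⟩, hs.1.1⟩
    · exact Finset.mem_sdiff.2 ⟨ht.1, fun h => ht.2.1 (Finset.mem_inter.1 h).1⟩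
  have hUcut : IsSCut S (A ∪ B) := by
    refine ⟨⟨?_, ?_⟩, ⟨s, ?_⟩, ⟨t, ?_⟩⟩
    · exact Finset.ne_empty_of_mem (Finset.mem_union_left _ hs.1.2)
    · intro h
      have := h ▸ Finset.mem_univ t
      simp only [Finset.mem_union] at this
      exact this.elim ht.2.1 ht.2.2
    · exact Finset.mem_inter.2 ⟨Finset.mem_union_left _ hs.1.2, hs.1.1⟩
    · exact Finset.mem_sdiff.2 ⟨ht.1, by simp [ht.2.1, ht.2.2]⟩
  have hle1 : cap w A ≤ cap w (A ∩ B) := hA.2 _ hIcut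
  have hle2 : cap w B ≤ cap w (A ∪ B) := hB.2 _ hUcut
  have hkey := submod_key w A B
  have hzero : (∑ u : V, ∑ v : V, ((if u ∈ A ∧ u ∉ B ∧ v ∈ B ∧ v ∉ A then w u v else 0)
      + (if u ∈ B ∧ u ∉ A ∧ v ∈ A ∧ v ∉ B then w u v else 0))) = 0 := by omega
  intro a ha b hb
  simp only [Finset.mem_sdiff] at ha hb
  rw [Finset.sum_eq_zero_iff] at hzero
  have h1 := hzero a (Finset.mem_univ a)
  rw [Finset.sum_eq_zero_iff] at h1
  have h2 := h1 b (Finset.mem_univ b)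
  simp [ha.1, ha.2, hb.1, hb.2] at h2
  exact h2
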